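/- For any point x ∈ ℝ^d, setting r = H_*^{1/2}(x − x_*), ∇f̂(x) = H_*^{-1/2}∇f(x), and σ = (M/μ^{3/2})‖r‖, one has ‖∇f̂(x) − r‖ ≤ σ‖r‖. -/

import Mathlib

/-!
Since `∇f(x_*) = 0`, the residual `∇f̂(x) − r` is `H_*^{-1/2}` applied to the first-order Taylor
remainder `∇f(x) − H_*(x − x_*)` of the gradient, which Assumption 2 bounds by `M‖x − x_*‖²`.
The curvature bound `μI ⪯ H_*` makes `‖H_*^{1/2} v‖ ≥ √μ‖v‖`, so both `H_*^{-1/2}` and the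
passage from `x − x_*` to `r` cost a factor `1/√μ`; in total `M‖r‖²/μ^{3/2}`.
-/

noncomputable section

open Matrix Finset

abbrev E (d : ℕ) := EuclideanSpace ℝ (Fin d)
abbrev Mat (d : ℕ) := Matrix (Fin d) (Fin d) ℝ

/-- Spectral (operator 2-) norm of a real matrix. -/
def spec {d : ℕ} (A : Mat d) : ℝ := ‖Matrix.toEuclideanCLM (𝕜 := ℝ) A‖

/-- Frobenius norm of a real matrix. -/
def frob {d : ℕ} (A : Mat d) : ℝ := Real.sqrt (∑ i, ∑ j, (A i j) ^ 2)

/-- A matrix acting on a Euclidean vector. -/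
def mApp {d : ℕ} (A : Mat d) (v : E d) : E d := Matrix.toEuclideanCLM (𝕜 := ℝ) A v

/-- Outer product `u vᵀ`. -/
def outer {d : ℕ} (u v : E d) : Mat d := Matrix.of fun i j => u i * v j

/-- Euclidean dot product. -/
def dot {d : ℕ} (u v : E d) : ℝ := ∑ i, u i * v i

/-- `σ(x) = (M/μ^{3/2})·‖H_*^{1/2}(x − x_*)‖`. -/
def sig {d : ℕ} (M μ : ℝ) (sqH : Mat d) (xs x : E d) : ℝ :=
  M / μ ^ ((3:ℝ)/2) * ‖mApp sqH (x - xs)‖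

open scoped RealInnerProductSpace

theorem norm_sub_sub_fderiv_le_of_lipschitzAt_fderiv {V W : Type*} [NormedAddCommGroup V]
    [NormedSpace ℝ V] [NormedAddCommGroup W] [NormedSpace ℝ W] {f : V → W} {f' : V → V →L[ℝ] W}
    {x₀ : V} {M : ℝ} (hM : 0 ≤ M) (hf : ∀ y, HasFDerivAt f (f' y) y)
    (hf' : ∀ y, ‖f' y - f' x₀‖ ≤ M * ‖y - x₀‖) (x : V) :
    ‖f x - f x₀ - f' x₀ (x - x₀)‖ ≤ M * ‖x - x₀‖ ^ 2 := by
  have hball : ∀ y ∈ Metric.closedBall x₀ ‖x - x₀‖, ‖f' y - f' x₀‖ ≤ M * ‖x - x₀‖ :=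
    fun y hy ↦ (hf' y).trans <| mul_le_mul_of_nonneg_left (mem_closedBall_iff_norm.1 hy) hM
  have := (convex_closedBall x₀ ‖x - x₀‖).norm_image_sub_le_of_norm_hasFDerivWithin_le'
    (fun y _ ↦ (hf y).hasFDerivWithinAt) hball (Metric.mem_closedBall_self (norm_nonneg _))
    (mem_closedBall_iff_norm.2 le_rfl)
  rwa [mul_assoc, ← sq] at this

theorem IsLocalMin.hasGradientAt_eq_zero {F : Type*} [NormedAddCommGroup F]
    [InnerProductSpace ℝ F] [CompleteSpace F] {f : F → ℝ} {a g : F}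
    (h : IsLocalMin f a) (hf : HasGradientAt f g a) : g = 0 := by
  simpa using congrArg (InnerProductSpace.toDual ℝ F).symm (h.hasFDerivAt_eq_zero hf.hasFDerivAt)

theorem IsSelfAdjoint.sqrt_mul_norm_le_norm_apply {V : Type*} [NormedAddCommGroup V]
    [InnerProductSpace ℝ V] [CompleteSpace V] {T : V →L[ℝ] V} (hT : IsSelfAdjoint T) {μ : ℝ}
    (h : ∀ v, μ * ‖v‖ ^ 2 ≤ ⟪v, (T * T) v⟫) (v : V) : √μ * ‖v‖ ≤ ‖T v‖ := by
  have hsq : μ * ‖v‖ ^ 2 ≤ ‖T v‖ ^ 2 := by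
    have : μ * ‖v‖ ^ 2 ≤ ⟪v, T (T v)⟫ := h v
    rwa [← ContinuousLinearMap.coe_coe T, ← hT.isSymmetric, real_inner_self_eq_norm_sq] at this
  simpa [Real.sqrt_mul' _ (sq_nonneg _)] using Real.sqrt_le_sqrt hsq

section MatrixAction

variable {d : ℕ}

lemma mApp_mul (A B : Mat d) (v : E d) : mApp (A * B) v = mApp A (mApp B v) := by
  simp [mApp, _root_.map_mul]

lemma dot_eq_inner (u v : E d) : dot u v = ⟪u, v⟫ := by
  simp [dot, PiLp.inner_apply, mul_comm]

lemma spec_sub (A B : Mat d) :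
    spec (A - B) = ‖toEuclideanCLM (𝕜 := ℝ) A - toEuclideanCLM (𝕜 := ℝ) B‖ := by
  rw [spec, map_sub]

lemma Matrix.IsHermitian.sqrt_mul_norm_le_norm_mApp {S : Mat d} (hS : S.IsHermitian) {μ : ℝ}
    (h : ∀ v, μ * ‖v‖ ^ 2 ≤ dot v (mApp (S * S) v)) (v : E d) :
    √μ * ‖v‖ ≤ ‖mApp S v‖ :=
  (isHermitian_iff_isSelfAdjoint.1 hS).map (toEuclideanCLM (𝕜 := ℝ)) |>.sqrt_mul_norm_le_norm_apply
    (fun v ↦ by simpa [dot_eq_inner, mApp] using h v) v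

lemma mApp_mul_inv_cancel {S : Mat d} (hS : IsUnit S.det) (w : E d) :
    mApp S (mApp S⁻¹ w) = w := by
  rw [← mApp_mul, mul_nonsing_inv S hS]
  simp [mApp]

lemma mApp_inv_sub_mApp {S : Mat d} (hS : IsUnit S.det) (w v : E d) :
    mApp S⁻¹ w - mApp S v = mApp S⁻¹ (w - mApp (S * S) v) := by
  have hv : mApp S v = mApp S⁻¹ (mApp (S * S) v) := by
    rw [← mApp_mul, nonsing_inv_mul_cancel_left _ _ hS]
  rw [hv]
  simp only [mApp, map_sub]

end MatrixAction

theorem weighted_gradient_residual_bound_general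
    {d : ℕ}
    (f : E d → ℝ) (g : E d → E d) (Hess : E d → Mat d) (xs : E d)
    (μ M : ℝ) (hμ : 0 < μ) (hM : 0 < M)
    -- `g` is the gradient of `f`, and `Hess` its Hessian (so `f` is twice differentiable)
    (hg : ∀ x, HasGradientAt f (g x) x)
    (hHd : ∀ x, HasFDerivAt g (Matrix.toEuclideanCLM (𝕜 := ℝ) (Hess x)) x)
    -- `xs` is the unique minimizer of `f`
    (hmin : ∀ x, f xs ≤ f x)
    -- Assumption 1: strong convexity and gradient Lipschitz continuity
    (hHl : ∀ x v, μ * ‖v‖ ^ 2 ≤ dot v (mApp (Hess x) v))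
    -- Assumption 2: Hessian Lipschitz continuity toward the optimum
    (hLip : ∀ x, spec (Hess x - Hess xs) ≤ M * ‖x - xs‖)
    -- `sqH` is the positive definite square root `H_*^{1/2}` of `H_* = ∇²f(x_*)`
    (sqH : Mat d) (hsqH : sqH.PosDef) (hsqH2 : sqH * sqH = Hess xs)
    (x : E d) :
    ‖mApp sqH⁻¹ (g x) - mApp sqH (x - xs)‖ ≤
      sig M μ sqH xs x * ‖mApp sqH (x - xs)‖ := by
  have hdet : IsUnit sqH.det := isUnit_iff_ne_zero.2 hsqH.det_pos.ne'
  have hgxs : g xs = 0 := IsLocalMin.hasGradientAt_eq_zero (.of_forall hmin) (hg xs)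
  have htaylor : ‖g x - mApp (Hess xs) (x - xs)‖ ≤ M * ‖x - xs‖ ^ 2 := by
    have := norm_sub_sub_fderiv_le_of_lipschitzAt_fderiv hM.le hHd
      (fun y ↦ (spec_sub (Hess y) (Hess xs)).symm.trans_le (hLip y)) x
    rwa [hgxs, sub_zero] at this
  have hlow : ∀ v, √μ * ‖v‖ ≤ ‖mApp sqH v‖ :=
    hsqH.isHermitian.sqrt_mul_norm_le_norm_mApp (hsqH2 ▸ hHl xs)
  have hres : √μ * ‖mApp sqH⁻¹ (g x - mApp (Hess xs) (x - xs))‖ ≤ M * ‖x - xs‖ ^ 2 :=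
    (mApp_mul_inv_cancel hdet _).symm ▸ hlow _ |>.trans htaylor
  have hs : 0 < √μ := Real.sqrt_pos.2 hμ
  rw [mApp_inv_sub_mApp hdet, hsqH2, sig]
  calc ‖mApp sqH⁻¹ (g x - mApp (Hess xs) (x - xs))‖
      ≤ M * ‖x - xs‖ ^ 2 / √μ := by rw [le_div_iff₀ hs]; linarith
    _ ≤ M * (‖mApp sqH (x - xs)‖ / √μ) ^ 2 / √μ := by
      gcongr
      rw [le_div_iff₀ hs, mul_comm]
      exact hlow _
    _ = M / μ ^ ((3 : ℝ) / 2) * ‖mApp sqH (x - xs)‖ * ‖mApp sqH (x - xs)‖ := by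
      rw [show μ ^ ((3 : ℝ) / 2) = √μ ^ 3 by
        rw [Real.sqrt_eq_rpow, ← Real.rpow_natCast, ← Real.rpow_mul hμ.le]; norm_num]
      field_simp

theorem weighted_gradient_residual_bound
    {d : ℕ}
    (f : E d → ℝ) (g : E d → E d) (Hess : E d → Mat d) (xs : E d)
    (μ L M : ℝ) (hμ : 0 < μ) (hμL : μ ≤ L) (hM : 0 < M)
    -- `g` is the gradient of `f`, and `Hess` its Hessian (so `f` is twice differentiable)
    (hg : ∀ x, HasGradientAt f (g x) x)
    (hHd : ∀ x, HasFDerivAt g (Matrix.toEuclideanCLM (𝕜 := ℝ) (Hess x)) x)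
    -- `xs` is the unique minimizer of `f`
    (hmin : ∀ x, f xs ≤ f x)
    (huniq : ∀ x, (∀ y, f x ≤ f y) → x = xs)
    -- Assumption 1: strong convexity and gradient Lipschitz continuity
    (hgl : ∀ x y, μ * ‖x - y‖ ≤ ‖g x - g y‖)
    (hgu : ∀ x y, ‖g x - g y‖ ≤ L * ‖x - y‖)
    (hHl : ∀ x v, μ * ‖v‖ ^ 2 ≤ dot v (mApp (Hess x) v))
    (hHu : ∀ x v, dot v (mApp (Hess x) v) ≤ L * ‖v‖ ^ 2)
    -- Assumption 2: Hessian Lipschitz continuity toward the optimum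
    (hLip : ∀ x, spec (Hess x - Hess xs) ≤ M * ‖x - xs‖)
    -- `sqH` is the positive definite square root `H_*^{1/2}` of `H_* = ∇²f(x_*)`
    (sqH : Mat d) (hsqH : sqH.PosDef) (hsqH2 : sqH * sqH = Hess xs)
    (x : E d) :
    ‖mApp sqH⁻¹ (g x) - mApp sqH (x - xs)‖ ≤
      sig M μ sqH xs x * ‖mApp sqH (x - xs)‖ :=
  weighted_gradient_residual_bound_general f g Hess xs μ M hμ hM hg hHd hmin hHl hLip sqH hsqH hsqH2
    x
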